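/- Let M : A ⥤ B be a functor from a discrete component-based category A into a componental category B such that the pointwise density comonad D of M exists. Then an object X of B admits a D-coalgebra if and only if X is isomorphic to a coproduct of objects each isomorphic to some M(A), A ∈ A. -/

import Mathlib

open CategoryTheory Limits

universe w v

variable {B : Type v} [Category.{w} B]

/-- An object `C` is connected if every morphism from `C` into a coproduct factors
uniquely through one of the coproduct inclusions. -/
def Connected' (C : B) : Prop :=
  ∀ {I : Type w} (f : I → B) (c : Cofan f), IsColimit c →
    ∀ g : C ⟶ c.pt, ∃! p : Σ i : I, C ⟶ f i, p.2 ≫ c.inj p.1 = g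

/-- A category is componental if every object is (isomorphic to) a coproduct of
connected objects and all coproduct inclusions are monomorphisms. -/
def Componental (B : Type v) [Category.{w} B] : Prop :=
  (∀ X : B, ∃ (I : Type w) (f : I → B) (c : Cofan f),
      (∀ i, Connected' (f i)) ∧ Nonempty (IsColimit c) ∧ Nonempty (c.pt ≅ X)) ∧
  (∀ (I : Type w) (f : I → B) (c : Cofan f), Nonempty (IsColimit c) → ∀ i, Mono (c.inj i))

/-- `C` is a component of `X` if `C` is connected and `X ≅ C + Y` for some `Y`. -/
def IsComponentOf (C X : B) : Prop :=
  Connected' C ∧ ∃ (Y : B) (i₁ : C ⟶ X) (i₂ : Y ⟶ X),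
    Nonempty (IsColimit (BinaryCofan.mk i₁ i₂))

/-! A coalgebra `ξ : X ⟶ D X`, restricted to a connected component `C` of `X`, lands in a single
summand of `D X`: it factors as `h ≫ ι A f` with `h : C ⟶ M A` and `f : M A ⟶ X`. The counit
gives `h ≫ f = (C ↪ X)`, and coassociativity together with uniqueness of such factorisations
gives `f ≫ ξ = ι A f`, so `f` is monic since coproduct inclusions are. Hence `C` is isomorphic to
the component of `M A` through which `h` factors, and that component is some `M A'` because `A`
is component-based. Conversely, on a coproduct of objects `M Aᵢ` one takes the coalgebra sending
the summand `M Aᵢ` to its own copy `ι Aᵢ` in `D X`. -/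

lemma Connected'.sigma_eq {C : B} (hC : Connected' C) {I : Type w} {f : I → B} {c : Cofan f}
    (hc : IsColimit c) {p q : Σ i, C ⟶ f i} (h : p.2 ≫ c.inj p.1 = q.2 ≫ c.inj q.1) : p = q :=
  (hC f c hc _).unique h rfl

lemma Connected'.eq_of_comp_inj_eq_inj {I : Type w} {f : I → B} {c : Cofan f}
    (hc : IsColimit c) {i j : I} (hi : Connected' (f i)) {g : f i ⟶ f j}
    (h : g ≫ c.inj j = c.inj i) : j = i :=
  congrArg Sigma.fst (hi.sigma_eq hc (p := ⟨j, g⟩) (q := ⟨i, 𝟙 _⟩) (by simpa using h))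

lemma Connected'.eq_id_of_comp_inj_eq_inj {I : Type w} {f : I → B} {c : Cofan f}
    (hc : IsColimit c) {i : I} (hi : Connected' (f i)) {g : f i ⟶ f i}
    (h : g ≫ c.inj i = c.inj i) : g = 𝟙 _ :=
  eq_of_heq (Sigma.mk.inj_iff.mp
    (hi.sigma_eq hc (p := ⟨i, g⟩) (q := ⟨i, 𝟙 _⟩) (by simpa using h))).2

lemma Connected'.exists_iso_of_inj_factor_mono {I K : Type w} {fC : I → B} {fD : K → B}
    {c : Cofan fC} {d : Cofan fD} (hc : IsColimit c) (hd : IsColimit d)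
    (hD : ∀ k, Connected' (fD k)) (m : d.pt ⟶ c.pt) [Mono m] {i : I}
    (hi : Connected' (fC i)) (h : fC i ⟶ d.pt) (hh : h ≫ m = c.inj i) :
    ∃ k, Nonempty (fC i ≅ fD k) := by
  obtain ⟨⟨k, h'⟩, hh' : h' ≫ d.inj k = h, -⟩ := hi fD d hd h
  obtain ⟨⟨j, e⟩, he : e ≫ c.inj j = d.inj k ≫ m, -⟩ := hD k fC c hc (d.inj k ≫ m)
  have hj : (h' ≫ e) ≫ c.inj j = c.inj i := by
    rw [Category.assoc, he, ← Category.assoc, hh', hh]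
  obtain rfl := hi.eq_of_comp_inj_eq_inj hc hj
  have he' : e ≫ h = d.inj k := by rw [← cancel_mono m, Category.assoc, hh, he]
  refine ⟨k, ⟨⟨h', e, hi.eq_id_of_comp_inj_eq_inj hc hj,
    Connected'.eq_id_of_comp_inj_eq_inj hd (hD k) ?_⟩⟩⟩
  rw [Category.assoc, hh', he']

lemma IsComponentOf.of_iso {C X Y : B} (h : IsComponentOf C X) (e : X ≅ Y) :
    IsComponentOf C Y := by
  obtain ⟨hC, Z, i₁, i₂, ⟨hcol⟩⟩ := h
  exact ⟨hC, Z, i₁ ≫ e.hom, i₂ ≫ e.hom,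
    ⟨hcol.ofIsoColimit (BinaryCofan.ext e rfl rfl)⟩⟩

lemma Connected'.isComponentOf_pt [HasCoproducts.{w} B] {I : Type w} {f : I → B}
    {c : Cofan f} (hc : IsColimit c) (i : I) (hi : Connected' (f i)) :
    IsComponentOf (f i) c.pt := by
  classical
  let single : Unit → I := fun _ ↦ i
  have hsingle : Function.Injective single := fun _ _ _ ↦ rfl
  -- `I ≃ {i} ⊕ {i}ᶜ`, so `c.pt` is the binary coproduct of `f i` and the coproduct of the rest
  let e := ((Equiv.ofInjective single hsingle).sumCongr (Equiv.refl _)).trans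
    (Equiv.Set.sumCompl _)
  exact ⟨hi, _, _, _, ⟨MonoCoprod.isColimitBinaryCofanSum _ _ _
    (Cofan.isColimitEquivOfEquiv e c hc)
    (Cofan.isColimitMkOfUnique (Iso.refl (f i)) Unit) (colimit.isColimit _)⟩⟩

/-- `(D, ε, δ)` is not assumed to satisfy the comonad laws, so this is not `Comonad.Coalgebra`. -/
def IsCoalgebraStructure {D : B ⥤ B} (ε : D ⟶ 𝟭 B) (δ : D ⟶ D ⋙ D) {X : B}
    (ξ : X ⟶ D.obj X) : Prop :=
  ξ ≫ ε.app X = 𝟙 X ∧ ξ ≫ δ.app X = ξ ≫ D.map ξ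

section DensityComonad

variable {J : Type w} {M : Discrete J ⥤ B} {D : B ⥤ B}
  (ι : ∀ (A : Discrete J) {X : B}, (M.obj A ⟶ X) → (M.obj A ⟶ D.obj X))

lemma ι_comp_map
    (hc : ∀ X : B, IsColimit (Cofan.mk (D.obj X)
      (fun p : Σ A : Discrete J, (M.obj A ⟶ X) => ι p.1 p.2)))
    (hmap : ∀ {X Y : B} (h : X ⟶ Y),
      D.map h = (hc X).desc (Cofan.mk (D.obj Y)
        (fun p : Σ A : Discrete J, (M.obj A ⟶ X) => ι p.1 (p.2 ≫ h))))
    (A : Discrete J) {Y Z : B} (g : M.obj A ⟶ Y) (h : Y ⟶ Z) :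
    ι A g ≫ D.map h = ι A (g ≫ h) := by
  rw [hmap h]
  exact (hc Y).fac _ ⟨⟨A, g⟩⟩

variable {ι}
  (hD : ∀ (A : Discrete J) {Y Z : B} (g : M.obj A ⟶ Y) (h : Y ⟶ Z),
    ι A g ≫ D.map h = ι A (g ≫ h))
include hD

lemma ι_comp_counit (ε : D ⟶ 𝟭 B)
    (hε : ∀ A : Discrete J, ι A (𝟙 (M.obj A)) ≫ ε.app (M.obj A) = 𝟙 (M.obj A))
    (A : Discrete J) {Y : B} (f : M.obj A ⟶ Y) : ι A f ≫ ε.app Y = f := by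
  calc ι A f ≫ ε.app Y = ι A (𝟙 _) ≫ D.map f ≫ ε.app Y := by
        rw [reassoc_of% hD, Category.id_comp]
    _ = f := by rw [ε.naturality, reassoc_of% hε, Functor.id_map]

lemma ι_comp_comul (δ : D ⟶ D ⋙ D)
    (hδ : ∀ A : Discrete J, ι A (𝟙 (M.obj A)) ≫ δ.app (M.obj A)
        = ι A (𝟙 (M.obj A)) ≫ D.map (ι A (𝟙 (M.obj A))))
    (A : Discrete J) {Y : B} (f : M.obj A ⟶ Y) : ι A f ≫ δ.app Y = ι A (ι A f) := by
  calc ι A f ≫ δ.app Y = ι A (𝟙 _) ≫ D.map f ≫ δ.app Y := by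
        rw [reassoc_of% hD, Category.id_comp]
    _ = ι A (ι A (𝟙 _) ≫ D.map f) := by
      rw [δ.naturality, reassoc_of% hδ, Functor.comp_map, ← D.map_comp, hD, Category.id_comp]
    _ = ι A (ι A f) := by rw [hD, Category.id_comp]

variable {δ : D ⟶ D ⋙ D}
  (hδ : ∀ (A : Discrete J) {Y : B} (f : M.obj A ⟶ Y), ι A f ≫ δ.app Y = ι A (ι A f))
include hδ

lemma comp_eq_ι_of_factor
    (hc : ∀ X : B, IsColimit (Cofan.mk (D.obj X)
      (fun p : Σ A : Discrete J, (M.obj A ⟶ X) => ι p.1 p.2)))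
    {X : B} {ξ : X ⟶ D.obj X} (hξ : ξ ≫ δ.app X = ξ ≫ D.map ξ) {C : B} (hC : Connected' C)
    {A : Discrete J} (f : M.obj A ⟶ X) (h : C ⟶ M.obj A) (g : C ⟶ X)
    (hfac : h ≫ ι A f = g ≫ ξ) : f ≫ ξ = ι A f := by
  have hcomul : h ≫ ι A (ι A f) = g ≫ ξ ≫ δ.app X := by
    rw [← hδ, reassoc_of% hfac]
  have hmap : h ≫ ι A (f ≫ ξ) = g ≫ ξ ≫ δ.app X := by
    rw [← hD, reassoc_of% hfac, hξ]
  have := hC.sigma_eq (hc (D.obj X)) (p := ⟨⟨A, f ≫ ξ⟩, h⟩) (q := ⟨⟨A, ι A f⟩, h⟩)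
    (hmap.trans hcomul.symm)
  exact eq_of_heq (Sigma.mk.inj_iff.mp (congrArg Sigma.fst this)).2

variable {ε : D ⟶ 𝟭 B}
  (hε : ∀ (A : Discrete J) {Y : B} (f : M.obj A ⟶ Y), ι A f ≫ ε.app Y = f)
include hε

lemma exists_mono_factor_of_isCoalgebraStructure
    (hc : ∀ X : B, IsColimit (Cofan.mk (D.obj X)
      (fun p : Σ A : Discrete J, (M.obj A ⟶ X) => ι p.1 p.2)))
    (hmono : ∀ (A : Discrete J) {Y : B} (f : M.obj A ⟶ Y), Mono (ι A f))
    {X : B} {ξ : X ⟶ D.obj X} (hξ : IsCoalgebraStructure ε δ ξ) {C : B} (hC : Connected' C)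
    (g : C ⟶ X) :
    ∃ (A : Discrete J) (f : M.obj A ⟶ X) (h : C ⟶ M.obj A), Mono f ∧ h ≫ f = g := by
  obtain ⟨⟨⟨A, f⟩, h⟩, hfac : h ≫ ι A f = g ≫ ξ, -⟩ := hC _ _ (hc X) (g ≫ ξ)
  have hfξ := comp_eq_ι_of_factor hD hδ hc hξ.2 hC f h g hfac
  have : Mono (f ≫ ξ) := hfξ ▸ hmono A f
  refine ⟨A, f, h, mono_of_mono f ξ, ?_⟩
  simpa [hε, hξ.1] using hfac =≫ ε.app X

lemma isCoalgebraStructure_of_comp_eq_ι {X : B} {K : Type*} {A : K → Discrete J}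
    (m : ∀ k, M.obj (A k) ⟶ X)
    (hm : ∀ {Z : B} (u v : X ⟶ Z), (∀ k, m k ≫ u = m k ≫ v) → u = v)
    (ξ : X ⟶ D.obj X) (hξ : ∀ k, m k ≫ ξ = ι (A k) (m k)) : IsCoalgebraStructure ε δ ξ :=
  ⟨hm _ _ fun k ↦ by rw [reassoc_of% (hξ k), hε, Category.comp_id],
    hm _ _ fun k ↦ by rw [reassoc_of% (hξ k), reassoc_of% (hξ k), hδ, hD, hξ]⟩

lemma exists_isCoalgebraStructure_of_cofan {I : Type w} {f : I → B} {c : Cofan f}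
    (hc : IsColimit c) (A : I → Discrete J) (ψ : ∀ i, f i ≅ M.obj (A i)) {X : B}
    (φ : c.pt ≅ X) : ∃ ξ : X ⟶ D.obj X, IsCoalgebraStructure ε δ ξ := by
  let m i : M.obj (A i) ⟶ X := (ψ i).inv ≫ c.inj i ≫ φ.hom
  refine ⟨φ.inv ≫ Cofan.IsColimit.desc hc (fun i ↦ (ψ i).hom ≫ ι (A i) (m i)),
    isCoalgebraStructure_of_comp_eq_ι hD hδ hε m ?_ _ fun i ↦ ?_⟩
  · intro Z u v huv
    rw [← cancel_epi φ.hom]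
    exact Cofan.IsColimit.hom_ext hc _ _ fun i ↦ by simpa [m] using (ψ i).hom ≫= huv i
  · simp [m, Cofan.IsColimit.fac]

lemma exists_iso_obj_of_isCoalgebraStructure [HasCoproducts.{w} B]
    (hc : ∀ X : B, IsColimit (Cofan.mk (D.obj X)
      (fun p : Σ A : Discrete J, (M.obj A ⟶ X) => ι p.1 p.2)))
    (hB : Componental B)
    (hbased : ∀ (A : Discrete J) (C' : B), IsComponentOf C' (M.obj A) →
      ∃ A' : Discrete J, Nonempty (C' ≅ M.obj A'))
    {X : B} {ξ : X ⟶ D.obj X} (hξ : IsCoalgebraStructure ε δ ξ)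
    {I : Type w} {f : I → B} {c : Cofan f} (hcol : IsColimit c) (hconn : ∀ i, Connected' (f i))
    (φ : c.pt ≅ X) (i : I) : ∃ A : Discrete J, Nonempty (f i ≅ M.obj A) := by
  obtain ⟨A, g, h, _, hhg⟩ := exists_mono_factor_of_isCoalgebraStructure hD hδ hε hc
    (fun A Y g ↦ hB.2 _ _ _ ⟨hc Y⟩ ⟨A, g⟩) hξ (hconn i) (c.inj i ≫ φ.hom)
  obtain ⟨K, fA, d, hconnA, ⟨hd⟩, ⟨ψ⟩⟩ := hB.1 (M.obj A)
  obtain ⟨k, ⟨e⟩⟩ := Connected'.exists_iso_of_inj_factor_mono hcol hd hconnA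
    (ψ.hom ≫ g ≫ φ.inv) (hconn i) (h ≫ ψ.inv) (by simp [reassoc_of% hhg])
  obtain ⟨A', ⟨χ⟩⟩ :=
    hbased A (fA k) ((Connected'.isComponentOf_pt hd k (hconnA k)).of_iso ψ)
  exact ⟨A', ⟨e ≪≫ χ⟩⟩

end DensityComonad

/-- for `M : A ⥤ B` from a discrete component-based category into a
componental category with pointwise density comonad `D`, an object `X` admits a
`D`-coalgebra iff `X` is isomorphic to a coproduct of objects each isomorphic to some
`M(A)`. -/
theorem stmt_10 {J : Type w} [HasCoproducts.{w} B]
    (M : Discrete J ⥤ B) (D : B ⥤ B)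
    (ι : ∀ (A : Discrete J) {X : B}, (M.obj A ⟶ X) → (M.obj A ⟶ D.obj X))
    (hc : ∀ X : B, IsColimit (Cofan.mk (D.obj X)
      (fun p : Σ A : Discrete J, (M.obj A ⟶ X) => ι p.1 p.2)))
    (hmap : ∀ {X Y : B} (h : X ⟶ Y),
      D.map h = (hc X).desc (Cofan.mk (D.obj Y)
        (fun p : Σ A : Discrete J, (M.obj A ⟶ X) => ι p.1 (p.2 ≫ h))))
    (ε : D ⟶ 𝟭 B) (δ : D ⟶ D ⋙ D)
    (hε : ∀ A : Discrete J, ι A (𝟙 (M.obj A)) ≫ ε.app (M.obj A) = 𝟙 (M.obj A))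
    (hδ : ∀ A : Discrete J, ι A (𝟙 (M.obj A)) ≫ δ.app (M.obj A)
        = ι A (𝟙 (M.obj A)) ≫ D.map (ι A (𝟙 (M.obj A))))
    (hB : Componental B)
    (hbased : ∀ (A : Discrete J) (C' : B), IsComponentOf C' (M.obj A) →
      ∃ A' : Discrete J, Nonempty (C' ≅ M.obj A'))
    (X : B) :
    (∃ ξ : X ⟶ D.obj X, ξ ≫ ε.app X = 𝟙 X ∧ ξ ≫ δ.app X = ξ ≫ D.map ξ) ↔
      ∃ (I : Type w) (f : I → B) (c : Cofan f),
        (∀ i, ∃ A : Discrete J, Nonempty (f i ≅ M.obj A)) ∧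
        Nonempty (IsColimit c) ∧ Nonempty (c.pt ≅ X) := by
  have hD := ι_comp_map ι hc hmap
  have hε' := ι_comp_counit hD ε hε
  have hδ' := ι_comp_comul hD δ hδ
  constructor
  · rintro ⟨ξ, hξ⟩
    obtain ⟨I, f, c, hconn, ⟨hcol⟩, ⟨φ⟩⟩ := hB.1 X
    exact ⟨I, f, c,
      exists_iso_obj_of_isCoalgebraStructure hD hδ' hε' hc hB hbased hξ hcol hconn φ,
      ⟨hcol⟩, ⟨φ⟩⟩
  · rintro ⟨I, f, c, hf, ⟨hcol⟩, ⟨φ⟩⟩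
    choose A ψ using hf
    exact exists_isCoalgebraStructure_of_cofan hD hδ' hε' hcol A (fun i ↦ (ψ i).some) φ
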